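/- If G is a k-regular graph of order n, then the k-conversion number of G equals n − α(G), where α(G) is the independence number of G. -/
import Mathlib


open scoped Classical

noncomputable def convStep {V : Type*} [Fintype V] (G : SimpleGraph V) (k : ℕ)
    (S : Finset V) : Finset V :=
  S ∪ Finset.univ.filter fun v => k ≤ (S.filter fun u => G.Adj v u).card

def IsConversionSet {V : Type*} [Fintype V] (G : SimpleGraph V) (k : ℕ)
    (S : Finset V) : Prop :=
  ∃ t : ℕ, (convStep G k)^[t] S = Finset.univ

noncomputable def convNum {V : Type*} [Fintype V] (G : SimpleGraph V) (k : ℕ) : ℕ :=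
  sInf {n : ℕ | ∃ S : Finset V, IsConversionSet G k S ∧ S.card = n}

def IndepFinset {V : Type*} (G : SimpleGraph V) (S : Finset V) : Prop :=
  ∀ v ∈ S, ∀ w ∈ S, ¬ G.Adj v w

noncomputable def indepNum {V : Type*} [Fintype V] (G : SimpleGraph V) : ℕ :=
  sSup {n : ℕ | ∃ S : Finset V, IndepFinset G S ∧ S.card = n}

lemma subset_convStep {V : Type*} [Fintype V] (G : SimpleGraph V) (k : ℕ) (S : Finset V) :
    S ⊆ convStep G k S := Finset.subset_union_left

lemma iterate_convStep_mono {V : Type*} [Fintype V] (G : SimpleGraph V) (k : ℕ)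
    {a b : ℕ} (h : a ≤ b) (S : Finset V) :
    (convStep G k)^[a] S ⊆ (convStep G k)^[b] S := by
  induction b, h using Nat.le_induction with
  | base => exact Finset.Subset.refl _
  | succ n hn ih =>
    refine ih.trans ?_
    rw [Function.iterate_succ_apply']
    exact subset_convStep G k _

theorem stmt2 {V : Type*} [Fintype V] (k : ℕ) (G : SimpleGraph V)
    (hreg : G.IsRegularOfDegree k) :
    convNum G k = Fintype.card V - indepNum G := by
  classical
  set A : Set ℕ := {n : ℕ | ∃ S : Finset V, IndepFinset G S ∧ S.card = n} with hA
  have hAne : A.Nonempty := ⟨0, ∅, fun v hv => absurd hv (by simp), Finset.card_empty⟩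
  have hAbdd : BddAbove A := by
    refine ⟨Fintype.card V, fun n hn => ?_⟩
    obtain ⟨S, _, rfl⟩ := hn
    exact Finset.card_le_univ S
  -- upper bound: take a maximum independent set
  have hmem : indepNum G ∈ A := Nat.sSup_mem hAne hAbdd
  obtain ⟨I, hI, hIcard⟩ := hmem
  have hle : convNum G k ≤ Fintype.card V - indepNum G := by
    refine Nat.sInf_le ⟨Iᶜ, ⟨1, ?_⟩, by rw [Finset.card_compl, hIcard]⟩
    simp only [Function.iterate_one]
    apply Finset.eq_univ_iff_forall.mpr
    intro v
    by_cases hv : v ∈ Iᶜ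
    · exact subset_convStep G k _ hv
    · have hvI : v ∈ I := by simpa using hv
      refine Finset.mem_union_right _ (Finset.mem_filter.mpr ⟨Finset.mem_univ v, ?_⟩)
      have hsub : G.neighborFinset v ⊆ Iᶜ.filter fun u => G.Adj v u := by
        intro u hu
        rw [SimpleGraph.mem_neighborFinset] at hu
        refine Finset.mem_filter.mpr ⟨?_, hu⟩
        rw [Finset.mem_compl]
        intro huI
        exact hI v hvI u huI hu
      calc k = (G.neighborFinset v).card := (hreg v).symm
        _ ≤ _ := Finset.card_le_card hsub
  -- lower bound
  have hge : Fintype.card V - indepNum G ≤ convNum G k := by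
    have hne : {n : ℕ | ∃ S : Finset V, IsConversionSet G k S ∧ S.card = n}.Nonempty :=
      ⟨Fintype.card V, Finset.univ, ⟨0, rfl⟩, Finset.card_univ⟩
    refine le_csInf hne ?_
    rintro m ⟨S, ⟨T, hT⟩, rfl⟩
    have hex : ∀ x : V, ∃ t, x ∈ (convStep G k)^[t] S := fun x =>
      ⟨T, by rw [hT]; exact Finset.mem_univ x⟩
    -- the complement of S is independent
    have key : ∀ v w : V, v ∉ S → w ∉ S → G.Adj v w →
        Nat.find (hex v) ≤ Nat.find (hex w) → False := by
      intro v w hvS hwS hadj hle'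
      set tv := Nat.find (hex v) with htv
      have hv0 : tv ≠ 0 := by
        intro h0
        have := Nat.find_spec (hex v)
        rw [← htv, h0] at this
        exact hvS this
      obtain ⟨t, ht⟩ := Nat.exists_eq_succ_of_ne_zero hv0
      have hvmem : v ∈ (convStep G k)^[tv] S := Nat.find_spec (hex v)
      have hvnot : v ∉ (convStep G k)^[t] S := Nat.find_min (hex v) (by omega)
      rw [ht, Function.iterate_succ_apply'] at hvmem
      have hk : k ≤ (((convStep G k)^[t] S).filter fun u => G.Adj v u).card := by
        rcases Finset.mem_union.mp hvmem with h | h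
        · exact absurd h hvnot
        · exact (Finset.mem_filter.mp h).2
      have hsub : (((convStep G k)^[t] S).filter fun u => G.Adj v u) ⊆ G.neighborFinset v := by
        intro u hu
        rw [SimpleGraph.mem_neighborFinset]
        exact (Finset.mem_filter.mp hu).2
      have heq : (((convStep G k)^[t] S).filter fun u => G.Adj v u) = G.neighborFinset v :=
        Finset.eq_of_subset_of_card_le hsub (by rw [show (G.neighborFinset v).card = k from hreg v]; exact hk)
      have hwmem : w ∈ (convStep G k)^[t] S := by
        have : w ∈ G.neighborFinset v := by rw [SimpleGraph.mem_neighborFinset]; exact hadj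
        rw [← heq] at this
        exact (Finset.mem_filter.mp this).1
      exact Nat.find_min (hex w) (by omega) hwmem
    have hindep : IndepFinset G Sᶜ := by
      intro v hv w hw hadj
      rw [Finset.mem_compl] at hv hw
      rcases le_total (Nat.find (hex v)) (Nat.find (hex w)) with h | h
      · exact key v w hv hw hadj h
      · exact key w v hw hv hadj.symm h
    have hcard : Fintype.card V - S.card ∈ A := ⟨Sᶜ, hindep, Finset.card_compl S⟩
    have hle2 : Fintype.card V - S.card ≤ indepNum G := le_csSup hAbdd hcard
    omega
  omega
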